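/- Let (A, a) be a 3CNF system over n ≥ 1 variables and let μ ∈ {0,1}^n be a satisfying assignment of (A, a). Then the point (x, y, w) with x = μ, y = 1, and w_i = 1/2 for i = 1,…,n is an optimal solution of P3SAT(A, a), and v(P3SAT(A, a)) = −1. -/

import Mathlib

noncomputable section

/-- The set of minimizers of `g` over `S`. -/
def argminOn {α : Type} (g : α → ℝ) (S : Set α) : Set α :=
  {x ∈ S | ∀ y ∈ S, g x ≤ g y}

/-- The lower-level feasible set of `P3SAT(A, a)`:
`{w' : −w'_i ≤ x_i − 1/2 ≤ w'_i, 0 ≤ w'_i ≤ 1}`. -/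
def lowW (n : ℕ) (x : Fin n → ℝ) : Set (Fin n → ℝ) :=
  {w' | ∀ i, (-(w' i) ≤ x i - 1 / 2 ∧ x i - 1 / 2 ≤ w' i) ∧ 0 ≤ w' i ∧ w' i ≤ 1}

/-- The feasible set of the bilevel program `P3SAT(A, a)`: triples `(x, y, w)`. -/
def F3SAT {n p : ℕ} (A : Matrix (Fin p) (Fin n) ℤ) (a : Fin p → ℤ) :
    Set ((Fin n → ℝ) × ℝ × (Fin n → ℝ)) :=
  {q | (∀ j, 3 / 2 - q.2.1 / 2 - (a j : ℝ) ≤ ∑ i, (A j i : ℝ) * q.1 i) ∧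
       (∀ i, 1 / 2 - q.2.1 / 2 ≤ q.1 i ∧ q.1 i ≤ 1 / 2 + q.2.1 / 2 ∧
         0 ≤ q.1 i ∧ q.1 i ≤ 1) ∧
       0 ≤ q.2.1 ∧ q.2.1 ≤ 1 ∧
       q.2.2 ∈ argminOn (fun w' => ∑ i, w' i) (lowW n q.1)}

/-- The objective of `P3SAT(A, a)`. -/
def obj3 (n : ℕ) (q : (Fin n → ℝ) × ℝ × (Fin n → ℝ)) : ℝ :=
  2 * ∑ i, (q.2.1 - 2 * q.2.2 i) - (2 / (n : ℝ)) * ∑ i, q.2.2 i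
/-- `(A, a)` is a 3CNF system. -/
def Is3CNF {n p : ℕ} (A : Matrix (Fin p) (Fin n) ℤ) (a : Fin p → ℤ) : Prop :=
  ∃ P N : Matrix (Fin p) (Fin n) ℤ,
    (∀ j i, 0 ≤ P j i) ∧ (∀ j i, 0 ≤ N j i) ∧ A = P - N ∧
    (∀ j, a j = ∑ i, N j i) ∧ (∀ j, (∑ i, (P j i + N j i)) = 3)

/-- `(A, a)` has a satisfying assignment. -/
def SatAssign {n p : ℕ} (A : Matrix (Fin p) (Fin n) ℤ) (a : Fin p → ℤ) : Prop :=
  ∃ μ : Fin n → ℤ, (∀ i, μ i = 0 ∨ μ i = 1) ∧ ∀ j, 1 - a j ≤ ∑ i, A j i * μ i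

/-- if `μ ∈ {0,1}^n` is a satisfying assignment of the 3CNF system `(A, a)`
over `n ≥ 1` variables, then `(x, y, w)` with `x = μ`, `y = 1`, `w_i = 1/2` is an optimal
solution of `P3SAT(A, a)` and `v(P3SAT(A, a)) = −1`. -/
theorem stmt5 (n p : ℕ) (hn : 1 ≤ n)
    (A : Matrix (Fin p) (Fin n) ℤ) (a : Fin p → ℤ) (h3 : Is3CNF A a)
    (μ : Fin n → ℤ) (hμ01 : ∀ i, μ i = 0 ∨ μ i = 1)
    (hμ : ∀ j, 1 - a j ≤ ∑ i, A j i * μ i) :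
    ((fun i => (μ i : ℝ)), (1 : ℝ), (fun _ => (1 / 2 : ℝ))) ∈ F3SAT A a ∧
    (∀ q ∈ F3SAT A a,
      obj3 n ((fun i => (μ i : ℝ)), (1 : ℝ), (fun _ => (1 / 2 : ℝ))) ≤ obj3 n q) ∧
    obj3 n ((fun i => (μ i : ℝ)), (1 : ℝ), (fun _ => (1 / 2 : ℝ))) = -1 := by

  have hn0 : (0:ℝ) < n := by exact_mod_cast hn
  have hval : obj3 n ((fun i => (μ i : ℝ)), (1 : ℝ), (fun _ => (1 / 2 : ℝ))) = -1 := by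
    simp only [obj3, Finset.sum_const, Finset.card_fin, nsmul_eq_mul]
    field_simp
    ring
  refine ⟨⟨?_, ?_, by norm_num, by norm_num, ⟨?_, ?_⟩⟩, ?_, hval⟩
  · intro j
    have h := hμ j
    have h' : ((1 - a j : ℤ) : ℝ) ≤ ((∑ i, A j i * μ i : ℤ) : ℝ) := by exact_mod_cast h
    push_cast at h'
    dsimp only
    linarith [h']
  · intro i
    dsimp only
    rcases hμ01 i with h | h <;> norm_num [h]
  · intro i
    dsimp only
    rcases hμ01 i with h | h <;> norm_num [h]
  · intro w' hw'
    apply Finset.sum_le_sum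
    intro i _
    obtain ⟨⟨h1, h2⟩, _, _⟩ := hw' i
    dsimp only at h1 h2 ⊢
    rcases hμ01 i with h | h <;>
      simp only [h, Int.cast_zero, Int.cast_one] at h1 h2 <;> linarith
  · rintro ⟨x, y, w⟩ ⟨_, hx, hy0, hy1, ⟨hwmem, hwmin⟩⟩
    rw [hval]
    dsimp only at hx hy0 hy1 hwmem hwmin ⊢
    have habs : (fun i => |x i - 1/2|) ∈ lowW n x := by
      intro i
      refine ⟨⟨neg_abs_le _, le_abs_self _⟩, abs_nonneg _, ?_⟩
      obtain ⟨hl, hr, _, _⟩ := hx i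
      rw [abs_le]; constructor <;> linarith
    have hS : ∑ i, w i ≤ ∑ i, |x i - 1/2| := hwmin _ habs
    have hS2 : ∑ i, |x i - 1/2| ≤ (n : ℝ) * (y / 2) := by
      calc ∑ i, |x i - 1/2| ≤ ∑ _i : Fin n, y / 2 := by
            apply Finset.sum_le_sum
            intro i _
            obtain ⟨hl, hr, _, _⟩ := hx i
            rw [abs_le]; constructor <;> linarith
        _ = (n : ℝ) * (y / 2) := by simp [Finset.sum_const, Finset.card_fin, nsmul_eq_mul]
    have hSy : ∑ i, w i ≤ (n : ℝ) * (y / 2) := le_trans hS hS2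
    have hsum : ∑ i, (y - 2 * w i) = (n : ℝ) * y - 2 * ∑ i, w i := by
      rw [Finset.sum_sub_distrib, Finset.sum_const, Finset.card_fin, nsmul_eq_mul,
        ← Finset.mul_sum]
    have hobj : obj3 n (x, y, w) = 2 * ((n : ℝ) * y) - 4 * ∑ i, w i
        - (2 / (n : ℝ)) * ∑ i, w i := by
      simp only [obj3]
      rw [hsum]; ring
    rw [hobj]
    have hdiv : (2 / (n : ℝ)) * ∑ i, w i ≤ y := by
      have h1 : (2 / (n : ℝ)) * ∑ i, w i ≤ (2 / (n : ℝ)) * ((n : ℝ) * (y / 2)) :=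
        mul_le_mul_of_nonneg_left hSy (by positivity)
      have h2 : (2 / (n : ℝ)) * ((n : ℝ) * (y / 2)) = y := by
        field_simp
      linarith
    linarith
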